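/- arXiv:2208.14709 — 2 statements merged into one kernel-verified Lean document; each statement's English description precedes it below -/
import Mathlib

section
/- (Automatic equilibrium of forces and moments.) Let n ∈ ℕ, let G be a finite simple graph on vertex set V with joint positions p : V → ℝⁿ, let ι be a finite index set, and for each i ∈ ι let w_i be a closed walk in G, F_i ∈ ℝⁿ a force vector, and M_i an element of the degree-2 part ⋀²(ℝⁿ) of the exterior algebra of ℝⁿ. Then for every vertex x of G, both Σ_{d : tail d = x} Σ_{i ∈ ι} c_{w_i}(d) • F_i = 0 in ℝⁿ, and Σ_{d : tail d = x} Σ_{i ∈ ι} c_{w_i}(d) • (p(x) ∧ F_i − M_i) = 0 in ⋀²(ℝⁿ); i.e., at every joint the sum of the internal forces and the sum of their moments taken with respect to the joint's own position both vanish. -/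
open Finset

/-- The signed traversal count of a dart `d` by a walk `w`: the number of occurrences of `d`
in `w.darts` minus the number of occurrences of the reverse of `d` in `w.darts`. -/
def signedCount {V : Type*} [DecidableEq V] {G : SimpleGraph V} {u v : V}
    (w : G.Walk u v) (d : G.Dart) : ℤ :=
  (w.darts.count d : ℤ) - (w.darts.count d.symm : ℤ)

lemma sum_signedCount_tail {V : Type*} [Fintype V] [DecidableEq V] {G : SimpleGraph V}
    [DecidableRel G.Adj] (x : V) :
    ∀ {u t : V} (w : G.Walk u t),
      ∑ d ∈ univ.filter (fun d : G.Dart => d.fst = x), signedCount w d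
        = (if u = x then 1 else 0) - (if t = x then 1 else 0) := by
  intro u t w
  induction w with
  | nil => simp [signedCount]
  | @cons a b c h w ih =>
    have hdarts : (SimpleGraph.Walk.cons h w).darts
        = SimpleGraph.Dart.mk (a, b) h :: w.darts := rfl
    set D : G.Dart := SimpleGraph.Dart.mk (a, b) h with hD
    have hstep : ∀ d : G.Dart, signedCount (SimpleGraph.Walk.cons h w) d
        = signedCount w d + ((if D = d then 1 else 0) - (if D = d.symm then 1 else 0) : ℤ) := by
      intro d
      simp only [signedCount, hdarts, List.count_cons, beq_iff_eq]
      push_cast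
      split_ifs <;> ring
    rw [Finset.sum_congr rfl (fun d _ => hstep d), Finset.sum_add_distrib, ih,
      Finset.sum_sub_distrib]
    have h1 : ∑ d ∈ univ.filter (fun d : G.Dart => d.fst = x), (if D = d then (1:ℤ) else 0)
        = if a = x then 1 else 0 := by
      rw [Finset.sum_ite_eq]
      simp [hD]
    have h2 : ∑ d ∈ univ.filter (fun d : G.Dart => d.fst = x), (if D = d.symm then (1:ℤ) else 0)
        = if b = x then 1 else 0 := by
      have : ∀ d : G.Dart, (D = d.symm) = (D.symm = d) := by
        intro d
        simp only [eq_iff_iff]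
        constructor
        · intro hh; rw [hh, SimpleGraph.Dart.symm_symm]
        · intro hh; rw [← hh, SimpleGraph.Dart.symm_symm]
      simp_rw [this]
      rw [Finset.sum_ite_eq]
      simp [hD]
    rw [h1, h2]
    ring

/-- Automatic equilibrium of forces and moments: given joint positions `p : V → ℝⁿ`, closed
walks `w i` each carrying a dyname consisting of a force `F i ∈ ℝⁿ` and a moment
`Mom i ∈ ⋀²(ℝⁿ)` (with respect to the origin), at every joint `x` both the sum of the
internal forces on the darts with tail `x` and the sum of their moments with respect to the
joint's own position `p x` (the moment of the dyname `i` with respect to a point `q` being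
`q ∧ F i − Mom i`) vanish. -/
theorem discontinuous_stress_function_force_and_moment_equilibrium
    {V : Type*} [Fintype V] [DecidableEq V] {G : SimpleGraph V} [DecidableRel G.Adj]
    (n : ℕ) (p : V → (Fin n → ℝ)) {ι : Type*} [Fintype ι]
    (v : ι → V) (w : ∀ i, G.Walk (v i) (v i))
    (F : ι → (Fin n → ℝ)) (Mom : ι → ⋀[ℝ]^2 (Fin n → ℝ)) (x : V) :
    (∑ d ∈ univ.filter (fun d : G.Dart => d.fst = x), ∑ i, signedCount (w i) d • F i) = 0 ∧
      (∑ d ∈ univ.filter (fun d : G.Dart => d.fst = x), ∑ i, signedCount (w i) d •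
          (ExteriorAlgebra.ιMulti ℝ 2 ![p x, F i]
            - (Mom i : ExteriorAlgebra ℝ (Fin n → ℝ)))) = 0 := by
  have key : ∀ i : ι,
      ∑ d ∈ univ.filter (fun d : G.Dart => d.fst = x), signedCount (w i) d = 0 := by
    intro i
    rw [sum_signedCount_tail x (w i)]
    ring
  constructor
  · rw [Finset.sum_comm]
    refine Finset.sum_eq_zero fun i _ => ?_
    rw [← Finset.sum_smul, key i, zero_smul]
  · rw [Finset.sum_comm]
    refine Finset.sum_eq_zero fun i _ => ?_
    rw [← Finset.sum_smul, key i, zero_smul]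
end

section
/- (Completeness of the discontinuous stress function.) Let G be a finite connected simple graph and M an additive commutative group. For every flow f from the darts of G to M, there exist a finite index set ι, closed walks w_i in G and elements g_i ∈ M (i ∈ ι) such that for every dart d, f(d) = Σ_{i ∈ ι} c_{w_i}(d) • g_i. That is, every internal force distribution in equilibrium arises from stress function pieces attached to loops of the structure. -/
open Finset

/-- A function from the darts of `G` to an additive commutative group is a flow if it is
antisymmetric under dart reversal and, at every vertex, the sum of its values over the darts
with tail at that vertex is zero. -/
def IsFlow {V : Type*} [Fintype V] (G : SimpleGraph V) [DecidableRel G.Adj] [DecidableEq V]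
    {M : Type*} [AddCommGroup M] (f : G.Dart → M) : Prop :=
  (∀ d : G.Dart, f d.symm = -f d) ∧
    ∀ x : V, ∑ d ∈ univ.filter (fun d : G.Dart => d.fst = x), f d = 0

lemma if_eq_comm_int {α : Type*} [DecidableEq α] (a b : α) :
    (if a = b then (1 : ℤ) else 0) = if b = a then (1 : ℤ) else 0 := by
  by_cases h : a = b
  · rw [if_pos h, if_pos h.symm]
  · rw [if_neg h, if_neg (fun hh => h hh.symm)]

lemma signedCount_append {V : Type*} [DecidableEq V] {G : SimpleGraph V} {u v x : V}
    (w1 : G.Walk u v) (w2 : G.Walk v x) (d : G.Dart) :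
    signedCount (w1.append w2) d = signedCount w1 d + signedCount w2 d := by
  simp only [signedCount, SimpleGraph.Walk.darts_append, List.count_append]
  push_cast
  ring

lemma count_darts_reverse {V : Type*} [DecidableEq V] {G : SimpleGraph V} {u v : V}
    (w : G.Walk u v) (d : G.Dart) :
    w.reverse.darts.count d = w.darts.count d.symm := by
  rw [SimpleGraph.Walk.darts_reverse, List.count_reverse]
  conv_lhs => rw [show d = d.symm.symm from (SimpleGraph.Dart.symm_symm d).symm]
  exact List.count_map_of_injective _ _ SimpleGraph.Dart.symm_involutive.injective _

lemma signedCount_reverse {V : Type*} [DecidableEq V] {G : SimpleGraph V} {u v : V}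
    (w : G.Walk u v) (d : G.Dart) :
    signedCount w.reverse d = - signedCount w d := by
  simp only [signedCount, count_darts_reverse, SimpleGraph.Dart.symm_symm]
  ring

lemma signedCount_cons {V : Type*} [DecidableEq V] {G : SimpleGraph V} {u v x : V}
    (h : G.Adj u v) (w : G.Walk v x) (d : G.Dart) :
    signedCount (SimpleGraph.Walk.cons h w) d =
      ((if d = SimpleGraph.Dart.mk (u, v) h then (1 : ℤ) else 0) -
        (if d.symm = SimpleGraph.Dart.mk (u, v) h then (1 : ℤ) else 0)) + signedCount w d := by
  simp only [signedCount, SimpleGraph.Walk.darts_cons, List.count_cons, beq_iff_eq]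
  push_cast
  rw [if_eq_comm_int d, if_eq_comm_int d.symm]
  ring

/-- Completeness of the discontinuous stress function: on a finite connected simple graph,
every flow is a signed combination of stress function pieces attached to closed walks. -/
theorem flow_eq_sum_closedWalk_pieces {V : Type*} [Fintype V] [DecidableEq V]
    {G : SimpleGraph V} [DecidableRel G.Adj] (hG : G.Connected)
    {M : Type*} [AddCommGroup M] (f : G.Dart → M) (hf : IsFlow G f) :
    ∃ (ι : Type) (_ : Fintype ι) (v : ι → V) (w : ∀ i, G.Walk (v i) (v i)) (g : ι → M),
      ∀ d : G.Dart, f d = ∑ i, signedCount (w i) d • g i := by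
  classical
  obtain ⟨r⟩ := hG.nonempty
  letI : LinearOrder V := LinearOrder.lift' (Fintype.equivFin V) (Equiv.injective _)
  have p : ∀ x : V, G.Walk r x := fun x => (hG r x).some
  let W : {d : G.Dart // d.fst < d.snd} → G.Walk r r := fun j =>
    (p j.1.fst).append (SimpleGraph.Walk.cons j.1.adj (p j.1.snd).reverse)
  let eqv : Fin (Fintype.card {d : G.Dart // d.fst < d.snd}) ≃ {d : G.Dart // d.fst < d.snd} :=
    (Fintype.equivFin _).symm
  refine ⟨Fin (Fintype.card {d : G.Dart // d.fst < d.snd}), inferInstance, fun _ => r,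
    fun i => W (eqv i), fun i => f (eqv i).1, ?_⟩
  intro e
  rw [Equiv.sum_comp eqv (fun j : {d : G.Dart // d.fst < d.snd} => signedCount (W j) e • f j.1)]
  set T : V → ℤ := fun x => signedCount (p x) e with hT
  have hsc : ∀ i : {d : G.Dart // d.fst < d.snd},
      signedCount (W i) e =
      (T i.1.fst - T i.1.snd) +
        ((if e = i.1 then (1 : ℤ) else 0) - (if e.symm = i.1 then (1 : ℤ) else 0)) := by
    intro i
    show signedCount ((p i.1.fst).append
        (SimpleGraph.Walk.cons i.1.adj (p i.1.snd).reverse)) e = _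
    rw [signedCount_append, signedCount_cons, signedCount_reverse]
    have : SimpleGraph.Dart.mk (i.1.fst, i.1.snd) i.1.adj = i.1 := rfl
    rw [this]
    ring
  -- The delta part sums to f e
  have hdelta : (∑ i : {d : G.Dart // d.fst < d.snd}, (if e = i.1 then (1 : ℤ) else 0) • f i.1)
      - (∑ i : {d : G.Dart // d.fst < d.snd}, (if e.symm = i.1 then (1 : ℤ) else 0) • f i.1)
      = f e := by
    have h1 : (∑ i : {d : G.Dart // d.fst < d.snd}, (if e = i.1 then (1 : ℤ) else 0) • f i.1)
        = if e.fst < e.snd then f e else 0 := by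
      by_cases he : e.fst < e.snd
      · rw [if_pos he, Fintype.sum_eq_single ⟨e, he⟩]
        · simp
        · intro j hj
          rw [if_neg, zero_smul]
          intro hej
          exact hj (Subtype.ext hej.symm)
      · rw [if_neg he, Finset.sum_eq_zero]
        intro j _
        rw [if_neg, zero_smul]
        intro hej
        exact he (hej ▸ j.2)
    have h2 : (∑ i : {d : G.Dart // d.fst < d.snd}, (if e.symm = i.1 then (1 : ℤ) else 0) • f i.1)
        = if e.symm.fst < e.symm.snd then f e.symm else 0 := by
      by_cases he : e.symm.fst < e.symm.snd
      · rw [if_pos he, Fintype.sum_eq_single ⟨e.symm, he⟩]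
        · simp
        · intro j hj
          rw [if_neg, zero_smul]
          intro hej
          exact hj (Subtype.ext hej.symm)
      · rw [if_neg he, Finset.sum_eq_zero]
        intro j _
        rw [if_neg, zero_smul]
        intro hej
        exact he (hej ▸ j.2)
    have hne : e.fst ≠ e.snd := e.adj.ne
    have hsymmfst : e.symm.fst = e.snd := rfl
    have hsymmsnd : e.symm.snd = e.fst := rfl
    rw [h1, h2, hsymmfst, hsymmsnd, hf.1]
    rcases lt_or_gt_of_ne hne with h | h
    · rw [if_pos h, if_neg (not_lt_of_gt h)]
      simp
    · rw [if_neg (not_lt_of_gt h), if_pos h]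
      simp
  -- The path part sums to 0
  have hpath : (∑ i : {d : G.Dart // d.fst < d.snd}, T i.1.fst • f i.1)
      - (∑ i : {d : G.Dart // d.fst < d.snd}, T i.1.snd • f i.1)
      = 0 := by
    have key : (∑ i : {d : G.Dart // d.fst < d.snd}, T i.1.fst • f i.1)
        - (∑ i : {d : G.Dart // d.fst < d.snd}, T i.1.snd • f i.1)
        = ∑ d : G.Dart, T d.fst • f d := by
      rw [← Finset.sum_sub_distrib]
      have split : (∑ d : G.Dart, T d.fst • f d)
          = (∑ d ∈ univ.filter (fun d : G.Dart => d.fst < d.snd), T d.fst • f d)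
            + (∑ d ∈ univ.filter (fun d : G.Dart => ¬ d.fst < d.snd), T d.fst • f d) := by
        rw [Finset.sum_filter_add_sum_filter_not]
      have img : (∑ d ∈ univ.filter (fun d : G.Dart => ¬ d.fst < d.snd), T d.fst • f d)
          = ∑ d ∈ univ.filter (fun d : G.Dart => d.fst < d.snd),
              T d.symm.fst • f d.symm := by
        refine Finset.sum_nbij' (fun d => d.symm) (fun d => d.symm) ?_ ?_ ?_ ?_ ?_
        · intro d hd
          simp only [Finset.mem_filter, Finset.mem_univ, true_and, not_lt] at hd ⊢
          have hne : d.fst ≠ d.snd := d.adj.ne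
          exact lt_of_le_of_ne hd (Ne.symm hne)
        · intro d hd
          simp only [Finset.mem_filter, Finset.mem_univ, true_and, not_lt] at hd ⊢
          exact le_of_lt hd
        · intro d _; exact SimpleGraph.Dart.symm_symm d
        · intro d _; exact SimpleGraph.Dart.symm_symm d
        · intro d _; rfl
      rw [split, img, ← Finset.sum_add_distrib,
        Finset.sum_subtype (p := fun d : G.Dart => d.fst < d.snd)
          (univ.filter (fun d : G.Dart => d.fst < d.snd)) (by simp)
          (fun d : G.Dart => T d.fst • f d + T d.symm.fst • f d.symm)]
      apply Finset.sum_congr rfl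
      intro i _
      have h1 : (i : G.Dart).symm.fst = (i : G.Dart).snd := rfl
      rw [h1, hf.1]
      simp [smul_neg, sub_eq_add_neg]
    rw [key, ← Finset.sum_fiberwise (univ : Finset G.Dart) (fun d : G.Dart => d.fst)
      (fun d => T d.fst • f d)]
    apply Finset.sum_eq_zero
    intro x _
    have : ∀ d ∈ univ.filter (fun d : G.Dart => d.fst = x), T d.fst • f d = T x • f d := by
      intro d hd
      simp only [Finset.mem_filter] at hd
      rw [hd.2]
    rw [Finset.sum_congr rfl this, ← Finset.smul_sum, hf.2 x, smul_zero]
  -- combine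
  have expand : (∑ i : {d : G.Dart // d.fst < d.snd}, signedCount (W i) e • f i.1)
      = ((∑ i : {d : G.Dart // d.fst < d.snd}, T i.1.fst • f i.1)
          - (∑ i : {d : G.Dart // d.fst < d.snd}, T i.1.snd • f i.1))
        + ((∑ i : {d : G.Dart // d.fst < d.snd}, (if e = i.1 then (1 : ℤ) else 0) • f i.1)
          - (∑ i : {d : G.Dart // d.fst < d.snd},
              (if e.symm = i.1 then (1 : ℤ) else 0) • f i.1)) := by
    simp only [hsc, add_smul, sub_smul]
    rw [Finset.sum_add_distrib, Finset.sum_sub_distrib, Finset.sum_sub_distrib]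
  rw [expand, hpath, zero_add, hdelta]
end
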